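/- Let a, b, c, k_f be real numbers with a ≠ 0, and let x be a real number with (c − x)/a > 0. Define ψ(x) = 2a·√((c − x)/a) + b and the phase profile φ(x) = (k_f/(4a))·[ arcsinh(ψ(x)) + (2b − ψ(x))·√(ψ(x)² + 1) ]. Then φ is differentiable at x and its derivative satisfies φ′(x) = k_f · ψ(x)/√(1 + ψ(x)²). (That is, φ satisfies the caustic design equation dφ/dx = k_f · f′(z)/√(1 + f′(z)²) under the tangent-ray correspondence between aperture points x and points on the parabola x = f(z) = az² + bz + c, where the slope at the corresponding curve point is ψ(x).) -/

import Mathlib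

/-!
Write `φ = k_f/(4a) · G ∘ ψ` with `G t = arsinh t + (2b - t)√(t² + 1)`. Differentiating,
`G' t = 2t(b - t)/√(1 + t²)`: the `√` terms collapse because `√(t² + 1)² = t² + 1`.
On the other hand `ψ' = -1/√((c - x)/a)` and `b - ψ = -2a√((c - x)/a)`, so in the chain
rule the square roots cancel and the factor `4a` cancels the prefactor `1/(4a)`.
-/

open Real

theorem hasDerivAt_arsinh_add_mul_sqrt (b t : ℝ) :
    HasDerivAt (fun s : ℝ => arsinh s + (2 * b - s) * √(s ^ 2 + 1))
      (2 * t * (b - t) / √(1 + t ^ 2)) t := by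
  have hpos : 0 < t ^ 2 + 1 := by positivity
  have hsq : √(t ^ 2 + 1) ^ 2 = t ^ 2 + 1 := sq_sqrt hpos.le
  have hsqrt : HasDerivAt (fun s : ℝ => √(s ^ 2 + 1)) (2 * t / (2 * √(t ^ 2 + 1))) t := by
    simpa using ((hasDerivAt_pow 2 t).add_const 1).sqrt hpos.ne'
  refine ((hasDerivAt_arsinh t).add
    (((hasDerivAt_id' t).const_sub (2 * b)).mul hsqrt)).congr_deriv ?_
  rw [add_comm 1 (t ^ 2)]
  field_simp
  linear_combination (-1 : ℝ) * hsq

theorem hasDerivAt_two_mul_sqrt_div_add {a : ℝ} (b c : ℝ) {x : ℝ} (ha : a ≠ 0)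
    (hx : 0 < (c - x) / a) :
    HasDerivAt (fun y : ℝ => 2 * a * √((c - y) / a) + b) (-1 / √((c - x) / a)) x := by
  have hinner : HasDerivAt (fun y : ℝ => (c - y) / a) (-1 / a) x := by
    simpa using ((hasDerivAt_id x).const_sub c).div_const a
  refine (((hinner.sqrt hx.ne').const_mul (2 * a)).add_const b).congr_deriv ?_
  field_simp

/-- Proposition 1: the phase profile
`φ(x) = (k_f/(4a)) [arcsinh(ψ(x)) + (2b − ψ(x))√(ψ(x)² + 1)]`,
with `ψ(x) = 2a√((c−x)/a) + b`, satisfies the caustic design equation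
`φ′(x) = k_f · ψ(x)/√(1 + ψ(x)²)` at every aperture point with `(c − x)/a > 0`. -/
theorem phase_profile_hasDerivAt (a b c kf x : ℝ) (ha : a ≠ 0)
    (hx : (c - x) / a > 0) :
    HasDerivAt
      (fun y : ℝ =>
        kf / (4 * a) *
          (Real.arsinh (2 * a * Real.sqrt ((c - y) / a) + b) +
            (2 * b - (2 * a * Real.sqrt ((c - y) / a) + b)) *
              Real.sqrt ((2 * a * Real.sqrt ((c - y) / a) + b) ^ 2 + 1)))
      (kf * (2 * a * Real.sqrt ((c - x) / a) + b) /
        Real.sqrt (1 + (2 * a * Real.sqrt ((c - x) / a) + b) ^ 2)) x := by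
  have hG := (hasDerivAt_arsinh_add_mul_sqrt b _).comp x
    (hasDerivAt_two_mul_sqrt_div_add b c ha hx)
  refine (hG.const_mul (kf / (4 * a))).congr_deriv ?_
  field_simp
  ring
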